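/- arXiv:1108.0353 — 3 statements merged into one kernel-verified Lean document; each statement's English description precedes it below -/
import Mathlib

section
/- Let G = (Σ, N, S, R, p) be a stochastic context-free grammar, i.e. a context-free grammar with finite terminal alphabet Σ, finite set of nonterminals N = {A_1, …, A_m} with start symbol S = A_1, finite rule set R, and a weight p : R → [0,1]. Assume G is proper (for every nonterminal A_i, the sum of p over all rules with premise A_i equals 1) and reduced (p(π) > 0 for every rule π and every nonterminal is useful, i.e. accessible from S and deriving some terminal string). Let M be the m×m expectation matrix M_{i,n} = Σ_j p(A_i → B_{i,j}) · r_n(i,j), where the sum is over all rules with premise A_i and r_n(i,j) is the number of occurrences of A_n in the right-hand side B_{i,j}. If the spectral radius ρ(M) < 1, then G is consistent at the start symbol: Σ_{π̄ ∈ Ω_1} p(π̄) = 1, where Ω_1 is the set of all complete leftmost derivations starting at A_1 and ending in a terminal string, and p(π₁⋯π_N) = p(π₁)⋯p(π_N). -/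
/-- A stochastic context-free grammar with nonterminals `Fin m` (start symbol `0`,
playing the role of `A₁`), terminals `Fin k`, rules indexed by the finite type `ρ`
(with premise `prem π` and right-hand side `rhs π`), and a weight
`p : ρ → [0,1]`. -/
structure SCFG (m k : ℕ) (ρ : Type) [Fintype ρ] where
  prem : ρ → Fin m
  rhs : ρ → List (Fin m ⊕ Fin k)
  p : ρ → ℝ
  p_nonneg : ∀ π, 0 ≤ p π
  p_le_one : ∀ π, p π ≤ 1

namespace SCFG

variable {m k : ℕ} {ρ : Type} [Fintype ρ] (G : SCFG m k ρ)

/-- The leftmost rewriting relation: `s` rewrites to `s'` by applying rule `π` to the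
leftmost nonterminal of `s`. -/
def LeftmostStep (s : List (Fin m ⊕ Fin k)) (π : ρ) (s' : List (Fin m ⊕ Fin k)) : Prop :=
  ∃ (u : List (Fin k)) (δ : List (Fin m ⊕ Fin k)),
    s = u.map Sum.inr ++ Sum.inl (G.prem π) :: δ ∧
    s' = u.map Sum.inr ++ G.rhs π ++ δ

/-- `StepSeq s l s'`: applying the rules of the list `l` in turn, each rewriting the
leftmost nonterminal, transforms the sentential form `s` into `s'`. -/
inductive StepSeq : List (Fin m ⊕ Fin k) → List ρ → List (Fin m ⊕ Fin k) → Prop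
  | nil (s : List (Fin m ⊕ Fin k)) : StepSeq s [] s
  | cons {s s' s'' : List (Fin m ⊕ Fin k)} {π : ρ} {l : List ρ} :
      G.LeftmostStep s π s' → StepSeq s' l s'' → StepSeq s (π :: l) s''

/-- A sentential form consisting only of terminals. -/
def IsTerminalString (s : List (Fin m ⊕ Fin k)) : Prop :=
  ∃ u : List (Fin k), s = u.map Sum.inr

/-- `CompleteDeriv i l`: the rule list `l` is a complete leftmost derivation starting
at the nonterminal `i` and ending in a terminal string. -/
def CompleteDeriv (i : Fin m) (l : List ρ) : Prop :=
  ∃ s, G.StepSeq [Sum.inl i] l s ∧ IsTerminalString s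

/-- The probability of a derivation: the product of the probabilities of its rules. -/
def weight (l : List ρ) : ℝ := (l.map G.p).prod

/-- `G` is proper: for each nonterminal, the weights of the rules with that premise
sum to `1`. -/
def Proper : Prop :=
  ∀ i : Fin m, ∑ π ∈ Finset.univ.filter (fun π => G.prem π = i), G.p π = 1

/-- A nonterminal is productive if some complete leftmost derivation starts at it. -/
def Productive (i : Fin m) : Prop := ∃ l, G.CompleteDeriv i l

/-- A nonterminal is accessible if some leftmost derivation sequence from the start
symbol produces a sentential form containing it. -/
def Accessible [NeZero m] (i : Fin m) : Prop :=
  ∃ l s, G.StepSeq [Sum.inl (0 : Fin m)] l s ∧ Sum.inl i ∈ s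

/-- The expectation matrix `M i n = ∑_j p(Aᵢ → B_{i,j}) · r_n(i,j)`, where `r_n(i,j)`
is the number of occurrences of the nonterminal `n` in the right-hand side of the
`j`-th rule with premise `i`. -/
noncomputable def expectationMatrix : Matrix (Fin m) (Fin m) ℝ :=
  fun i n => ∑ π ∈ Finset.univ.filter (fun π => G.prem π = i),
    G.p π * ((G.rhs π).count (Sum.inl n) : ℝ)

end SCFG

/-!
Leftmost derivation is a Markov chain on sentential forms in which terminal strings are
absorbing. The total weight of the complete derivations of length at most `N` is the
probability of absorption within `N` steps; its complement is the survival probability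
`∑ₐ ℓ_N(a)`, where `ℓ_j(a)` is the probability that after `j` steps the leftmost nonterminal
is `a`.

A step that rewrites a leftmost `a` changes the expected number of occurrences of `n` by
`(M - 1) a n`. Telescoping over the first `N` steps, and using that counts stay nonnegative,
gives `Λ_N (1 - M) ≤ c` for `Λ_N = ∑_{j<N} ℓ_j` and the occurrence vector `c` of the start
form. As `ρ(M) < 1`, the Neumann series `K = ∑ Mⁿ` converges to a nonnegative inverse of
`1 - M`, so `Λ_N ≤ c K` stays bounded. Hence the survival probabilities are summable and tend
to `0`, and the absorption probability tends to `1`.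
-/

open Filter Topology Finset

-- Needed for `List.count` on sentential forms, which uses the derived `BEq` of `Sum`.
instance Sum.instLawfulBEq {α β : Type*} [BEq α] [BEq β] [LawfulBEq α] [LawfulBEq β] :
    LawfulBEq (α ⊕ β) where
  rfl {x} := by
    cases x with
    | inl a => exact beq_self_eq_true a
    | inr b => exact beq_self_eq_true b
  eq_of_beq {x y} h := by
    cases x <;> cases y <;> first | cases h | exact congrArg _ (eq_of_beq h)

theorem summable_norm_pow_of_spectralRadius_lt_one {A : Type*} [NormedRing A]
    [NormedAlgebra ℂ A] [CompleteSpace A] {a : A} (h : spectralRadius ℂ a < 1) :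
    Summable (‖a ^ ·‖) := by
  obtain ⟨r, hρr, hr1⟩ := exists_between h
  lift r to NNReal using hr1.ne_top
  refine .of_norm_bounded_eventually
    (summable_geometric_of_lt_one r.2 (by exact_mod_cast hr1)) ?_
  rw [Nat.cofinite_eq_atTop]
  filter_upwards [(spectrum.pow_nnnorm_pow_one_div_tendsto_nhds_spectralRadius a).eventually
    (gt_mem_nhds hρr), eventually_gt_atTop 0] with n hn hn0
  rw [one_div, ENNReal.rpow_inv_lt_iff (by positivity), ENNReal.rpow_natCast] at hn
  rw [norm_norm]
  exact_mod_cast (show ‖a ^ n‖₊ ≤ r ^ n by exact_mod_cast hn.le)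

theorem hasSum_of_monotone_of_tendsto {ι : Type*} {f : ι → ℝ} (hf : 0 ≤ f)
    {F : ℕ → Finset ι} (hmono : Monotone F) (hcover : ∀ i, ∃ N, i ∈ F N) {a : ℝ}
    (ha : Tendsto (fun N => ∑ i ∈ F N, f i) atTop (𝓝 a)) : HasSum f a := by
  have hF := tendsto_atTop_finset_of_monotone hmono hcover
  have hsum_mono : Monotone fun N => ∑ i ∈ F N, f i := fun _ _ hNM =>
    sum_le_sum_of_subset_of_nonneg (hmono hNM) fun i _ _ => hf i
  have hsummable : Summable f := summable_of_sum_le hf fun u => by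
    obtain ⟨N, hN⟩ := (hF.eventually (eventually_ge_atTop u)).exists
    exact (sum_le_sum_of_subset_of_nonneg hN fun i _ _ => hf i).trans
      (hsum_mono.ge_of_tendsto ha N)
  exact tendsto_nhds_unique (hsummable.hasSum.comp hF) ha ▸ hsummable.hasSum

namespace Matrix

variable {ι : Type*} [Fintype ι] [DecidableEq ι]

open scoped Matrix.Norms.Operator in
theorem summable_pow_of_spectralRadius_lt_one {M : Matrix ι ι ℝ}
    (h : spectralRadius ℂ (M.map Complex.ofReal) < 1) : Summable (M ^ ·) := by
  refine Summable.of_norm ((summable_norm_pow_of_spectralRadius_lt_one h).congr fun n => ?_)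
  rw [show M.map Complex.ofReal = M.map Complex.ofRealHom from rfl, ← Matrix.map_pow]
  simp [linfty_opNorm_def]

theorem tsum_pow_apply_nonneg {M : Matrix ι ι ℝ} (hM : ∀ i j, 0 ≤ M i j)
    (hs : Summable (M ^ ·)) (i j : ι) : 0 ≤ (∑' n, M ^ n) i j :=
  (Pi.hasSum.mp (Pi.hasSum.mp hs.hasSum i) j).nonneg fun n => pow_apply_nonneg hM n i j

theorem le_vecMul_of_vecMul_le {R : Type*} [Semiring R] [PartialOrder R] [IsOrderedRing R]
    {A K : Matrix ι ι R} (hAK : A * K = 1) (hK : ∀ i j, 0 ≤ K i j) {x y : ι → R}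
    (h : vecMul x A ≤ y) : x ≤ vecMul y K := by
  intro j
  calc x j = vecMul (vecMul x A) K j := by rw [vecMul_vecMul, hAK, vecMul_one]
    _ ≤ vecMul y K j := sum_le_sum fun i _ => mul_le_mul_of_nonneg_right (h i) (hK i j)

end Matrix

namespace SCFG

variable {m k : ℕ} {ρ : Type} [Fintype ρ] {G : SCFG m k ρ}

def leftmostSplit :
    List (Fin m ⊕ Fin k) → Option (List (Fin k) × Fin m × List (Fin m ⊕ Fin k))
  | [] => none
  | Sum.inl a :: δ => some ([], a, δ)
  | Sum.inr x :: t => (leftmostSplit t).map fun w => (x :: w.1, w.2)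

theorem leftmostSplit_eq_some_iff {s : List (Fin m ⊕ Fin k)} {u : List (Fin k)} {a : Fin m}
    {δ : List (Fin m ⊕ Fin k)} :
    leftmostSplit s = some (u, a, δ) ↔ s = u.map Sum.inr ++ Sum.inl a :: δ := by
  induction s generalizing u with
  | nil => simp [leftmostSplit]
  | cons x t ih =>
    rcases x with b | y
    · cases u <;> simp [leftmostSplit, eq_comm]
    · cases u <;> simp [leftmostSplit, ← ih, and_comm]

theorem leftmostSplit_eq_none_iff {s : List (Fin m ⊕ Fin k)} :
    leftmostSplit s = none ↔ IsTerminalString s := by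
  induction s with
  | nil => exact ⟨fun _ => ⟨[], rfl⟩, fun _ => rfl⟩
  | cons x t ih =>
    rcases x with b | y
    · simp only [leftmostSplit, reduceCtorEq, false_iff]
      rintro ⟨_ | ⟨z, u⟩, h⟩ <;> simp at h
    · simp only [leftmostSplit, Option.map_eq_none_iff, ih]
      constructor
      · rintro ⟨u, rfl⟩
        exact ⟨y :: u, rfl⟩
      · rintro ⟨_ | ⟨z, u⟩, h⟩ <;> simp only [List.map_nil, List.map_cons, reduceCtorEq,
          List.cons.injEq] at h
        exact ⟨u, h.2⟩

theorem leftmostStep_iff {s s' : List (Fin m ⊕ Fin k)} {u : List (Fin k)} {a : Fin m}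
    {δ : List (Fin m ⊕ Fin k)} (h : leftmostSplit s = some (u, a, δ)) {π : ρ} :
    G.LeftmostStep s π s' ↔ G.prem π = a ∧ s' = u.map Sum.inr ++ G.rhs π ++ δ := by
  constructor
  · rintro ⟨u', δ', rfl, rfl⟩
    obtain ⟨rfl, rfl, rfl⟩ : u' = u ∧ G.prem π = a ∧ δ' = δ := by
      simpa using (leftmostSplit_eq_some_iff.mpr rfl).symm.trans h
    exact ⟨rfl, rfl⟩
  · rintro ⟨rfl, rfl⟩
    exact ⟨u, δ, leftmostSplit_eq_some_iff.mp h, rfl⟩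

variable (G) in
def DerivesTerminal (s : List (Fin m ⊕ Fin k)) (l : List ρ) : Prop :=
  ∃ t, G.StepSeq s l t ∧ IsTerminalString t

theorem derivesTerminal_nil_iff {s : List (Fin m ⊕ Fin k)} :
    G.DerivesTerminal s [] ↔ IsTerminalString s :=
  ⟨fun ⟨_, hst, ht⟩ => by cases hst; exact ht, fun hs => ⟨s, .nil s, hs⟩⟩

theorem not_derivesTerminal_cons_of_isTerminalString {s : List (Fin m ⊕ Fin k)}
    (hs : IsTerminalString s) (π : ρ) (l : List ρ) : ¬ G.DerivesTerminal s (π :: l) := by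
  rintro ⟨t, hst, -⟩
  cases hst with | cons hstep _ =>
  obtain ⟨u, δ, rfl, -⟩ := hstep
  rw [← leftmostSplit_eq_none_iff, leftmostSplit_eq_some_iff.mpr rfl] at hs
  exact Option.some_ne_none _ hs

theorem derivesTerminal_cons_iff {s : List (Fin m ⊕ Fin k)} {u : List (Fin k)} {a : Fin m}
    {δ : List (Fin m ⊕ Fin k)} (h : leftmostSplit s = some (u, a, δ)) {π : ρ} {l : List ρ} :
    G.DerivesTerminal s (π :: l) ↔
      G.prem π = a ∧ G.DerivesTerminal (u.map Sum.inr ++ G.rhs π ++ δ) l := by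
  constructor
  · rintro ⟨t, hst, ht⟩
    cases hst with | cons hstep hst =>
    obtain ⟨hπ, rfl⟩ := (leftmostStep_iff h).mp hstep
    exact ⟨hπ, t, hst, ht⟩
  · rintro ⟨hπ, t, hst, ht⟩
    exact ⟨t, .cons ((leftmostStep_iff h).mpr ⟨hπ, rfl⟩) hst, ht⟩

variable (G) in
def rules (a : Fin m) : Finset ρ := univ.filter fun π => G.prem π = a

@[simps]
def consEmbedding : (Σ _ : ρ, List ρ) ↪ List ρ :=
  ⟨fun x => x.1 :: x.2, fun ⟨_, _⟩ ⟨_, _⟩ h => by cases h; rfl⟩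

variable (G) in
def completeDerivs : ℕ → List (Fin m ⊕ Fin k) → Finset (List ρ)
  | 0, s => match leftmostSplit s with
    | none => {[]}
    | some _ => ∅
  | N + 1, s => match leftmostSplit s with
    | none => {[]}
    | some (u, a, δ) => ((G.rules a).sigma fun π =>
        completeDerivs N (u.map Sum.inr ++ G.rhs π ++ δ)).map consEmbedding

theorem completeDerivs_of_isTerminalString {N : ℕ} {s : List (Fin m ⊕ Fin k)}
    (hs : IsTerminalString s) : G.completeDerivs N s = {[]} := by
  rw [← leftmostSplit_eq_none_iff] at hs
  cases N <;> simp [completeDerivs, hs]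

theorem completeDerivs_succ {N : ℕ} {s : List (Fin m ⊕ Fin k)} {u : List (Fin k)} {a : Fin m}
    {δ : List (Fin m ⊕ Fin k)} (h : leftmostSplit s = some (u, a, δ)) :
    G.completeDerivs (N + 1) s = ((G.rules a).sigma fun π =>
        G.completeDerivs N (u.map Sum.inr ++ G.rhs π ++ δ)).map consEmbedding := by
  simp [completeDerivs, h]

theorem mem_completeDerivs {N : ℕ} {s : List (Fin m ⊕ Fin k)} {l : List ρ} :
    l ∈ G.completeDerivs N s ↔ G.DerivesTerminal s l ∧ l.length ≤ N := by
  induction N generalizing s l with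
  | zero => ?_
  | succ N ih => ?_
  all_goals
    rcases h : leftmostSplit s with _ | ⟨u, a, δ⟩
    · rw [leftmostSplit_eq_none_iff] at h
      rw [completeDerivs_of_isTerminalString h]
      cases l with
      | nil => simpa using derivesTerminal_nil_iff.mpr h
      | cons π l =>
        exact iff_of_false (by simp) fun hl =>
          not_derivesTerminal_cons_of_isTerminalString h π l hl.1
  · refine iff_of_false (by simp [completeDerivs, h]) fun ⟨hl, hlen⟩ => ?_
    rw [List.length_eq_zero_iff.mp (Nat.le_zero.mp hlen), derivesTerminal_nil_iff,
      ← leftmostSplit_eq_none_iff, h] at hl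
    exact Option.some_ne_none _ hl
  · rw [completeDerivs_succ h]
    cases l with
    | nil =>
      refine iff_of_false (by simp) fun ⟨hl, _⟩ => ?_
      rw [derivesTerminal_nil_iff, ← leftmostSplit_eq_none_iff, h] at hl
      exact Option.some_ne_none _ hl
    | cons π l => simp [rules, derivesTerminal_cons_iff h, ih, and_assoc]

theorem weight_nonneg (l : List ρ) : 0 ≤ G.weight l :=
  List.prod_nonneg (List.forall_mem_map.mpr fun π _ => G.p_nonneg π)

variable (G) in
/-- `(G.transitionOp f) s` is the expected value of `f` after one leftmost rewriting step
from `s`; terminal strings are left unchanged. -/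
noncomputable def transitionOp :
    (List (Fin m ⊕ Fin k) → ℝ) →ₗ[ℝ] (List (Fin m ⊕ Fin k) → ℝ) where
  toFun f s := match leftmostSplit s with
    | none => f s
    | some (u, a, δ) => ∑ π ∈ G.rules a, G.p π * f (u.map Sum.inr ++ G.rhs π ++ δ)
  map_add' f g := by
    funext s
    rcases h : leftmostSplit s with _ | ⟨u, a, δ⟩ <;> simp [h, mul_add, sum_add_distrib]
  map_smul' c f := by
    funext s
    rcases h : leftmostSplit s with _ | ⟨u, a, δ⟩ <;> simp [h, mul_sum, mul_left_comm]

theorem transitionOp_apply_of_isTerminalString {s : List (Fin m ⊕ Fin k)}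
    (hs : IsTerminalString s) (f : List (Fin m ⊕ Fin k) → ℝ) : G.transitionOp f s = f s := by
  rw [← leftmostSplit_eq_none_iff] at hs
  simp [transitionOp, hs]

theorem transitionOp_pow_apply_of_isTerminalString {s : List (Fin m ⊕ Fin k)}
    (hs : IsTerminalString s) (f : List (Fin m ⊕ Fin k) → ℝ) (N : ℕ) :
    (G.transitionOp ^ N) f s = f s := by
  induction N with
  | zero => rfl
  | succ N ih =>
    rw [pow_succ', Module.End.mul_apply, transitionOp_apply_of_isTerminalString hs, ih]

theorem transitionOp_apply_of_leftmostSplit {s : List (Fin m ⊕ Fin k)} {u : List (Fin k)}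
    {a : Fin m} {δ : List (Fin m ⊕ Fin k)} (h : leftmostSplit s = some (u, a, δ))
    (f : List (Fin m ⊕ Fin k) → ℝ) :
    G.transitionOp f s = ∑ π ∈ G.rules a, G.p π * f (u.map Sum.inr ++ G.rhs π ++ δ) := by
  simp [transitionOp, h]

theorem transitionOp_nonneg {f : List (Fin m ⊕ Fin k) → ℝ} (hf : 0 ≤ f) :
    0 ≤ G.transitionOp f := by
  intro s
  rcases h : leftmostSplit s with _ | ⟨u, a, δ⟩
  · rw [transitionOp_apply_of_isTerminalString (leftmostSplit_eq_none_iff.mp h)]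
    exact hf s
  · rw [transitionOp_apply_of_leftmostSplit h]
    exact sum_nonneg fun π _ => mul_nonneg (G.p_nonneg π) (hf _)

theorem transitionOp_pow_nonneg {f : List (Fin m ⊕ Fin k) → ℝ} (hf : 0 ≤ f) (N : ℕ) :
    0 ≤ (G.transitionOp ^ N) f := by
  induction N with
  | zero => exact hf
  | succ N ih =>
    rw [pow_succ', Module.End.mul_apply]
    exact transitionOp_nonneg ih

theorem transitionOp_one (hp : G.Proper) : G.transitionOp 1 = 1 := by
  funext s
  rcases h : leftmostSplit s with _ | ⟨u, a, δ⟩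
  · rw [transitionOp_apply_of_isTerminalString (leftmostSplit_eq_none_iff.mp h)]
  · rw [transitionOp_apply_of_leftmostSplit h]
    simp only [Pi.one_apply, mul_one]
    exact hp a

theorem transitionOp_pow_one (hp : G.Proper) (N : ℕ) : (G.transitionOp ^ N) 1 = 1 := by
  induction N with
  | zero => rfl
  | succ N ih => rw [pow_succ, Module.End.mul_apply, transitionOp_one hp, ih]

def terminalIndicator (s : List (Fin m ⊕ Fin k)) : ℝ :=
  match leftmostSplit s with
  | none => 1
  | some _ => 0

def leftmostIndicator (a : Fin m) (s : List (Fin m ⊕ Fin k)) : ℝ :=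
  match leftmostSplit s with
  | none => 0
  | some (_, b, _) => if b = a then 1 else 0

theorem leftmostIndicator_nonneg (a : Fin m) :
    0 ≤ (leftmostIndicator a : List (Fin m ⊕ Fin k) → ℝ) := by
  intro s
  unfold leftmostIndicator
  split <;> positivity

theorem terminalIndicator_add_sum_leftmostIndicator :
    terminalIndicator + ∑ a, leftmostIndicator a = (1 : List (Fin m ⊕ Fin k) → ℝ) := by
  funext s
  rcases h : leftmostSplit s with _ | ⟨u, a, δ⟩ <;>
    simp [terminalIndicator, leftmostIndicator, h]

theorem sum_weight_completeDerivs (N : ℕ) (s : List (Fin m ⊕ Fin k)) :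
    ∑ l ∈ G.completeDerivs N s, G.weight l = (G.transitionOp ^ N) terminalIndicator s := by
  induction N generalizing s with
  | zero => ?_
  | succ N ih => ?_
  all_goals
    rcases h : leftmostSplit s with _ | ⟨u, a, δ⟩
    · have hs := leftmostSplit_eq_none_iff.mp h
      rw [completeDerivs_of_isTerminalString hs, transitionOp_pow_apply_of_isTerminalString hs]
      simp [weight, terminalIndicator, h]
  · simp [completeDerivs, terminalIndicator, h]
  · rw [completeDerivs_succ h, pow_succ', Module.End.mul_apply,
      transitionOp_apply_of_leftmostSplit h, sum_map, sum_sigma]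
    simp [weight, ← ih, mul_sum]

variable (G) in
noncomputable def survival (N : ℕ) (s : List (Fin m ⊕ Fin k)) : ℝ :=
  ∑ a, (G.transitionOp ^ N) (leftmostIndicator a) s

theorem survival_nonneg (N : ℕ) (s : List (Fin m ⊕ Fin k)) : 0 ≤ G.survival N s :=
  sum_nonneg fun a _ => transitionOp_pow_nonneg (leftmostIndicator_nonneg a) N s

theorem sum_weight_completeDerivs_add_survival (hp : G.Proper) (N : ℕ)
    (s : List (Fin m ⊕ Fin k)) :
    ∑ l ∈ G.completeDerivs N s, G.weight l + G.survival N s = 1 := by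
  have := congrFun (congrArg (G.transitionOp ^ N) terminalIndicator_add_sum_leftmostIndicator) s
  rw [map_add, map_sum, transitionOp_pow_one hp] at this
  simpa [sum_weight_completeDerivs, survival] using this

def occurrences (n : Fin m) (s : List (Fin m ⊕ Fin k)) : ℝ := s.count (Sum.inl n)

theorem transitionOp_occurrences (hp : G.Proper) (n : Fin m) :
    G.transitionOp (occurrences n) =
      occurrences n + ∑ a, (G.expectationMatrix - 1) a n • leftmostIndicator a := by
  funext s
  rcases h : leftmostSplit s with _ | ⟨u, a, δ⟩
  · rw [transitionOp_apply_of_isTerminalString (leftmostSplit_eq_none_iff.mp h)]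
    simp [leftmostIndicator, h]
  · have hM : ∑ π ∈ G.rules a, G.p π * (G.rhs π).count (Sum.inl n) =
        G.expectationMatrix a n := rfl
    have hone : ∑ π ∈ G.rules a, G.p π = 1 := hp a
    rw [transitionOp_apply_of_leftmostSplit h]
    obtain rfl := leftmostSplit_eq_some_iff.mp h
    simp [occurrences, leftmostIndicator, h, mul_add, sum_add_distrib, ← sum_mul, hM, hone,
      Matrix.one_apply, List.count_cons]
    ring

theorem transitionOp_pow_occurrences (hp : G.Proper) (n : Fin m) (N : ℕ) :
    (G.transitionOp ^ N) (occurrences n) = occurrences n + ∑ j ∈ range N,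
      ∑ a, (G.expectationMatrix - 1) a n • (G.transitionOp ^ j) (leftmostIndicator a) := by
  induction N with
  | zero => simp
  | succ N ih =>
    rw [pow_succ, Module.End.mul_apply, transitionOp_occurrences hp, map_add, ih, map_sum,
      sum_range_succ, add_assoc]
    simp only [map_smul]

variable (G) in
noncomputable def leftmostVisits (N : ℕ) (s : List (Fin m ⊕ Fin k)) (a : Fin m) : ℝ :=
  ∑ j ∈ range N, (G.transitionOp ^ j) (leftmostIndicator a) s

theorem vecMul_leftmostVisits_le (hp : G.Proper) (N : ℕ) (s : List (Fin m ⊕ Fin k)) :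
    Matrix.vecMul (G.leftmostVisits N s) (1 - G.expectationMatrix) ≤
      fun n => occurrences n s := by
  intro n
  have hcount := congrFun (transitionOp_pow_occurrences hp n N) s
  have hnonneg : 0 ≤ (G.transitionOp ^ N) (occurrences n) s :=
    transitionOp_pow_nonneg (fun s => Nat.cast_nonneg _) N s
  have hvec : Matrix.vecMul (G.leftmostVisits N s) (1 - G.expectationMatrix) n =
      occurrences n s - (G.transitionOp ^ N) (occurrences n) s := by
    simp only [hcount, Pi.add_apply, Finset.sum_apply, Pi.smul_apply, smul_eq_mul,
      sub_add_cancel_left, Matrix.vecMul, dotProduct, leftmostVisits, sum_mul,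
      Matrix.sub_apply]
    rw [sum_comm, ← sum_neg_distrib]
    refine sum_congr rfl fun j _ => ?_
    rw [← sum_neg_distrib]
    exact sum_congr rfl fun a _ => by ring
  simp only [hvec]
  linarith

theorem expectationMatrix_nonneg (i j : Fin m) : 0 ≤ G.expectationMatrix i j :=
  sum_nonneg fun π _ => mul_nonneg (G.p_nonneg π) (Nat.cast_nonneg _)

theorem tendsto_survival_of_nonneg_inverse (hp : G.Proper) {K : Matrix (Fin m) (Fin m) ℝ}
    (hK : (1 - G.expectationMatrix) * K = 1) (hK0 : ∀ i j, 0 ≤ K i j)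
    (s : List (Fin m ⊕ Fin k)) : Tendsto (G.survival · s) atTop (𝓝 0) := by
  refine (summable_of_sum_range_le (c := ∑ a, Matrix.vecMul (fun n => occurrences n s) K a)
    (fun N => survival_nonneg N s) fun N => ?_).tendsto_atTop_zero
  calc ∑ j ∈ range N, G.survival j s = ∑ a, G.leftmostVisits N s a := sum_comm
    _ ≤ ∑ a, Matrix.vecMul (fun n => occurrences n s) K a :=
      sum_le_sum fun a _ =>
        Matrix.le_vecMul_of_vecMul_le hK hK0 (vecMul_leftmostVisits_le hp N s) a

theorem hasSum_weight_completeDeriv_of_tendsto_survival (hp : G.Proper) (i : Fin m)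
    (h : Tendsto (G.survival · [Sum.inl i]) atTop (𝓝 0)) :
    HasSum (fun l : {l : List ρ // G.CompleteDeriv i l} => G.weight l.1) 1 := by
  classical
  have hlim : Tendsto (fun N => ∑ l ∈ G.completeDerivs N [Sum.inl i], G.weight l)
      atTop (𝓝 1) := by
    simpa using (tendsto_const_nhds (x := (1 : ℝ))).sub h |>.congr fun N =>
      (eq_sub_of_add_eq (sum_weight_completeDerivs_add_survival hp N _)).symm
  refine hasSum_of_monotone_of_tendsto ?_
    (F := fun N => (G.completeDerivs N [Sum.inl i]).subtype (G.CompleteDeriv i)) ?_ ?_ ?_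
  · exact fun l => weight_nonneg l.1
  · intro N N' hNN' l hl
    rw [mem_subtype, mem_completeDerivs] at hl ⊢
    exact ⟨hl.1, hl.2.trans hNN'⟩
  · intro l
    refine ⟨l.1.length, ?_⟩
    rw [mem_subtype, mem_completeDerivs]
    exact ⟨l.2, le_rfl⟩
  · exact hlim.congr fun N =>
      (sum_subtype_of_mem _ fun l hl => (mem_completeDerivs.mp hl).1).symm

end SCFG

theorem scfg_consistent_of_spectralRadius_lt_one_general {m k : ℕ} [NeZero m] {ρ : Type}
    [Fintype ρ] (G : SCFG m k ρ)
    (hproper : G.Proper)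
    (hρ : spectralRadius ℂ (G.expectationMatrix.map Complex.ofReal) < 1) :
    HasSum (fun l : {l : List ρ // G.CompleteDeriv (0 : Fin m) l} => G.weight l.1) 1 := by
  have hsummable := Matrix.summable_pow_of_spectralRadius_lt_one hρ
  have hK0 := Matrix.tsum_pow_apply_nonneg SCFG.expectationMatrix_nonneg hsummable
  exact SCFG.hasSum_weight_completeDeriv_of_tendsto_survival hproper 0
    (SCFG.tendsto_survival_of_nonneg_inverse hproper hsummable.one_sub_mul_tsum_pow hK0 _)

/-- **Consistency of a stochastic context-free grammar (Booth–Thompson)**: if a proper,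
reduced SCFG (all rule probabilities positive, all nonterminals accessible and
productive) has expectation matrix of spectral radius `< 1` (as a complex matrix), then
the probabilities of all complete leftmost derivations from the start symbol sum
to `1`. -/
theorem scfg_consistent_of_spectralRadius_lt_one {m k : ℕ} [NeZero m] {ρ : Type}
    [Fintype ρ] (G : SCFG m k ρ)
    (hproper : G.Proper)
    (hpos : ∀ π, 0 < G.p π)
    (huseful : ∀ i : Fin m, G.Accessible i ∧ G.Productive i)
    (hρ : spectralRadius ℂ (G.expectationMatrix.map Complex.ofReal) < 1) :
    HasSum (fun l : {l : List ρ // G.CompleteDeriv (0 : Fin m) l} => G.weight l.1) 1 :=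
  scfg_consistent_of_spectralRadius_lt_one_general G hproper hρ
end

section
/- First-order moment recursion for a fixed-point system of moment generating functions: let Z_1, …, Z_m : ℝ^d → ℝ be smooth functions with Z_i(0) = 1 for all i. For each i let p_{i,1}, …, p_{i,J_i} be nonnegative reals with Σ_j p_{i,j} = 1, let y_{i,j} ∈ ℝ^d, and let r_n(i,j) ∈ ℕ for 1 ≤ n ≤ m. Suppose that on a neighborhood of 0, Z_i(t) = Σ_{j=1}^{J_i} p_{i,j} · e^{⟨t, y_{i,j}⟩} · ∏_{n=1}^m Z_n(t)^{r_n(i,j)} for every i. Then for each coordinate s ∈ {1, …, d} and each i, ∂_s Z_i(0) = Σ_{n=1}^m M_{i,n} · ∂_s Z_n(0) + Σ_{j=1}^{J_i} p_{i,j} · (y_{i,j})_s, where M_{i,n} = Σ_{j=1}^{J_i} p_{i,j} · r_n(i,j) and ∂_s denotes the partial derivative with respect to t_s evaluated at t = 0. -/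
/-- **First-order moment recursion for a fixed-point system of moment generating
functions**: if smooth functions `Z₁, …, Z_m : ℝ^d → ℝ` with `Z i 0 = 1` satisfy, on a
neighborhood of `0`, the system
`Z i t = ∑ j, p i j · e^{⟨t, y i j⟩} · ∏ n, (Z n t)^(r i j n)`
with `p i j ≥ 0`, `∑ j, p i j = 1`, then the first-order partial derivatives at `0`
satisfy `∂ₛ Z i (0) = ∑ n, M i n · ∂ₛ Z n (0) + ∑ j, p i j · (y i j) s`,
where `M i n = ∑ j, p i j · r i j n`. -/
theorem first_order_moment_recursion {d m : ℕ}
    (Z : Fin m → (Fin d → ℝ) → ℝ) (hZ : ∀ i, ContDiff ℝ (⊤ : ℕ∞) (Z i))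
    (hZ0 : ∀ i, Z i 0 = 1)
    (J : Fin m → ℕ) (p : ∀ i, Fin (J i) → ℝ) (y : ∀ i, Fin (J i) → (Fin d → ℝ))
    (r : ∀ i, Fin (J i) → Fin m → ℕ)
    (hp : ∀ i j, 0 ≤ p i j) (hp1 : ∀ i, ∑ j, p i j = 1)
    (hfix : ∀ᶠ t in nhds (0 : Fin d → ℝ), ∀ i,
      Z i t = ∑ j, p i j * Real.exp (∑ s, t s * y i j s) * ∏ n, (Z n t) ^ (r i j n)) :
    ∀ (s : Fin d) (i : Fin m),
      fderiv ℝ (Z i) 0 (Pi.single s 1) =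
        (∑ n, (∑ j, p i j * (r i j n : ℝ)) * fderiv ℝ (Z n) 0 (Pi.single s 1)) +
          ∑ j, p i j * y i j s := by
  intro s i
  classical
  have hD : ∀ n, HasFDerivAt (Z n) (fderiv ℝ (Z n) 0) 0 := fun n =>
    (((hZ n).differentiable (by simp)) 0).hasFDerivAt
  set D : Fin m → ℝ := fun n => fderiv ℝ (Z n) 0 (Pi.single s 1) with hDdef
  -- eventual equality
  have heq : Z i =ᶠ[nhds (0 : Fin d → ℝ)] fun t =>
      ∑ j, p i j * Real.exp (∑ s, t s * y i j s) * ∏ n, (Z n t) ^ (r i j n) :=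
    hfix.mono fun t ht => ht i
  -- derivative of the inner linear map
  have hg : ∀ j, HasFDerivAt (fun t : Fin d → ℝ => ∑ s', t s' * y i j s')
      (∑ s' : Fin d, y i j s' • (ContinuousLinearMap.proj s' : (Fin d → ℝ) →L[ℝ] ℝ)) 0 := by
    intro j
    apply HasFDerivAt.fun_sum
    intro s' _
    exact ((ContinuousLinearMap.proj s' : (Fin d → ℝ) →L[ℝ] ℝ).hasFDerivAt).mul_const (y i j s')
  have hE : ∀ j, HasFDerivAt (fun t : Fin d → ℝ => Real.exp (∑ s', t s' * y i j s'))
      (∑ s' : Fin d, y i j s' • (ContinuousLinearMap.proj s' : (Fin d → ℝ) →L[ℝ] ℝ)) 0 := by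
    intro j
    have := (hg j).exp
    simpa using this
  have hpow : ∀ j n, HasFDerivAt (fun t => (Z n t) ^ (r i j n))
      ((r i j n : ℝ) • fderiv ℝ (Z n) 0) 0 := by
    intro j n
    have h1 : HasDerivAt (fun x : ℝ => x ^ (r i j n)) ((r i j n : ℝ) * (Z n 0) ^ (r i j n - 1)) (Z n 0) :=
      hasDerivAt_pow _ _
    have := h1.comp_hasFDerivAt 0 (hD n)
    simpa [hZ0 n, Function.comp_def] using this
  have hP : ∀ j, HasFDerivAt (fun t => ∏ n, (Z n t) ^ (r i j n))
      (∑ n, (r i j n : ℝ) • fderiv ℝ (Z n) 0) 0 := by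
    intro j
    have := HasFDerivAt.finset_prod (u := Finset.univ) (fun n _ => hpow j n)
    have he : ∀ n : Fin m, (∏ k ∈ Finset.univ.erase n, (Z k 0) ^ (r i j k)) = 1 := by
      intro n; apply Finset.prod_eq_one; intro k _; simp [hZ0 k]
    simpa [he, smul_smul] using this
  have hterm : ∀ j, HasFDerivAt
      (fun t : Fin d → ℝ => p i j * Real.exp (∑ s', t s' * y i j s') * ∏ n, (Z n t) ^ (r i j n))
      (p i j • ((∑ n, (r i j n : ℝ) • fderiv ℝ (Z n) 0)
        + ∑ s' : Fin d, y i j s' • (ContinuousLinearMap.proj s' : (Fin d → ℝ) →L[ℝ] ℝ))) 0 := by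
    intro j
    have h2 := ((hE j).fun_mul (hP j)).const_mul (p i j)
    have hx0 : Real.exp (∑ s', (0 : Fin d → ℝ) s' * y i j s') = 1 := by simp
    have hxP : (∏ n, (Z n 0) ^ (r i j n)) = 1 := by
      apply Finset.prod_eq_one; intro k _; simp [hZ0 k]
    simp only [hx0, hxP, one_smul] at h2
    simpa only [← mul_assoc] using h2
  have hF : HasFDerivAt
      (fun t : Fin d → ℝ => ∑ j, p i j * Real.exp (∑ s', t s' * y i j s') * ∏ n, (Z n t) ^ (r i j n))
      (∑ j, p i j • ((∑ n, (r i j n : ℝ) • fderiv ℝ (Z n) 0)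
        + ∑ s' : Fin d, y i j s' • (ContinuousLinearMap.proj s' : (Fin d → ℝ) →L[ℝ] ℝ))) 0 :=
    HasFDerivAt.fun_sum fun j _ => hterm j
  have hfd : fderiv ℝ (Z i) 0 = ∑ j, p i j • ((∑ n, (r i j n : ℝ) • fderiv ℝ (Z n) 0)
        + ∑ s' : Fin d, y i j s' • (ContinuousLinearMap.proj s' : (Fin d → ℝ) →L[ℝ] ℝ)) := by
    rw [heq.fderiv_eq]
    exact hF.fderiv
  have happ : fderiv ℝ (Z i) 0 (Pi.single s 1) =
      ∑ j, p i j * ((∑ n, (r i j n : ℝ) * D n)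
        + ∑ s' : Fin d, y i j s' * (Pi.single s 1 : Fin d → ℝ) s') := by
    rw [hfd]
    simp only [ContinuousLinearMap.sum_apply, ContinuousLinearMap.smul_apply,
      ContinuousLinearMap.add_apply, smul_eq_mul, hDdef, ContinuousLinearMap.proj_apply]
  have hsingle : ∀ j, (∑ s' : Fin d, y i j s' * (Pi.single s 1 : Fin d → ℝ) s') = y i j s := by
    intro j
    rw [Finset.sum_eq_single s] <;> simp (config := {contextual := true}) [Pi.single_apply]
  rw [happ]
  simp only [hsingle, hDdef, mul_add, Finset.sum_add_distrib, Finset.mul_sum,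
    Finset.sum_mul, mul_assoc]
  rw [Finset.sum_comm]
end

section
/- Second-order moment recursion (scalar case): let Z_1, …, Z_m : ℝ → ℝ be smooth functions with Z_i(0) = 1 for all i. For each i let p_{i,1}, …, p_{i,J_i} be nonnegative reals with Σ_j p_{i,j} = 1, let y_{i,j} ∈ ℝ, and let r_n(i,j) ∈ ℕ for 1 ≤ n ≤ m. Suppose that on a neighborhood of 0, Z_i(t) = Σ_{j=1}^{J_i} p_{i,j} · e^{t·y_{i,j}} · ∏_{n=1}^m Z_n(t)^{r_n(i,j)} for every i. Write m^{(1)}_n = Z_n'(0) and M_{i,n} = Σ_j p_{i,j} r_n(i,j). Then for each i, Z_i''(0) = Σ_{n=1}^m M_{i,n} · Z_n''(0) + c_i, where c_i = Σ_{j=1}^{J_i} p_{i,j} · [ (Σ_{n=1}^m r_n(i,j) m^{(1)}_n)^2 − Σ_{n=1}^m r_n(i,j) (m^{(1)}_n)^2 + y_{i,j}^2 + 2·y_{i,j}·Σ_{n=1}^m r_n(i,j) m^{(1)}_n ]. -/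
open Filter ContDiff

namespace MomRec

variable {f g : ℝ → ℝ}

lemma diff_of (hf : ContDiff ℝ ∞ f) : Differentiable ℝ f :=
  hf.differentiable (by simp)

lemma deriv_smooth (hf : ContDiff ℝ ∞ f) : ContDiff ℝ ∞ (deriv f) :=
  (contDiff_infty_iff_deriv.mp hf).2

lemma deriv_mul_fun (hf : ContDiff ℝ ∞ f) (hg : ContDiff ℝ ∞ g) :
    deriv (fun t => f t * g t) = fun t => deriv f t * g t + f t * deriv g t :=
  funext fun t => deriv_mul (diff_of hf t) (diff_of hg t)

lemma deriv2_mul (hf : ContDiff ℝ ∞ f) (hg : ContDiff ℝ ∞ g) (x : ℝ) :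
    deriv (deriv (fun t => f t * g t)) x
      = deriv (deriv f) x * g x + 2 * (deriv f x * deriv g x) + f x * deriv (deriv g) x := by
  rw [deriv_mul_fun hf hg]
  rw [deriv_fun_add ((diff_of (deriv_smooth hf) x).fun_mul (diff_of hg x))
      ((diff_of hf x).fun_mul (diff_of (deriv_smooth hg) x)),
    deriv_fun_mul (diff_of (deriv_smooth hf) x) (diff_of hg x),
    deriv_fun_mul (diff_of hf x) (diff_of (deriv_smooth hg) x)]
  ring

lemma deriv_mul_at (hf : ContDiff ℝ ∞ f) (hg : ContDiff ℝ ∞ g) (x : ℝ) :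
    deriv (fun t => f t * g t) x = deriv f x * g x + f x * deriv g x :=
  deriv_mul (diff_of hf x) (diff_of hg x)

lemma pow_derivs {Z : ℝ → ℝ} (hZ : ContDiff ℝ ∞ Z) (hZ0 : Z 0 = 1) (r : ℕ) :
    deriv (fun t => Z t ^ r) 0 = r * deriv Z 0 ∧
    deriv (deriv (fun t => Z t ^ r)) 0
      = r * deriv (deriv Z) 0 + ((r : ℝ) ^ 2 - r) * (deriv Z 0) ^ 2 := by
  induction r with
  | zero =>
      simp
  | succ r ih =>
      have hp : ContDiff ℝ ∞ (fun t => Z t ^ r) := hZ.pow r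
      have e : (fun t => Z t ^ (r + 1)) = fun t => Z t * Z t ^ r := by
        funext t; ring
      rw [e]
      constructor
      · rw [deriv_mul_at hZ hp 0, ih.1]
        simp only [hZ0, one_pow]
        push_cast; ring
      · rw [deriv2_mul hZ hp 0, ih.1, ih.2]
        simp only [hZ0, one_pow]
        push_cast; ring

lemma prod_derivs {ι : Type*} [DecidableEq ι] (s : Finset ι) (f : ι → ℝ → ℝ)
    (hf : ∀ n, ContDiff ℝ ∞ (f n)) (h0 : ∀ n, f n 0 = 1) :
    deriv (fun t => ∏ n ∈ s, f n t) 0 = ∑ n ∈ s, deriv (f n) 0 ∧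
    deriv (deriv (fun t => ∏ n ∈ s, f n t)) 0
      = ∑ n ∈ s, deriv (deriv (f n)) 0 + (∑ n ∈ s, deriv (f n) 0) ^ 2
        - ∑ n ∈ s, (deriv (f n) 0) ^ 2 := by
  induction s using Finset.induction with
  | empty => simp
  | @insert a s ha ih =>
      have hg : ContDiff ℝ ∞ (fun t => ∏ n ∈ s, f n t) :=
        contDiff_prod fun n _ => hf n
      have e : (fun t => ∏ n ∈ insert a s, f n t)
          = fun t => f a t * ∏ n ∈ s, f n t := by
        funext t; exact Finset.prod_insert ha
      rw [e]
      constructor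
      · rw [deriv_mul_at (hf a) hg 0, ih.1, Finset.sum_insert ha]
        simp only [h0, Finset.prod_const_one]
        ring
      · rw [deriv2_mul (hf a) hg 0, ih.1, ih.2,
          Finset.sum_insert ha, Finset.sum_insert ha, Finset.sum_insert ha]
        simp only [h0, Finset.prod_const_one]
        ring

end MomRec

/-- **Second-order moment recursion (scalar case)**: if smooth `Z₁, …, Z_m : ℝ → ℝ`
with `Z i 0 = 1` satisfy, on a neighborhood of `0`, the system
`Z i t = ∑ j, p i j · e^{t · y i j} · ∏ n, (Z n t)^(r i j n)` with `p i j ≥ 0`,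
`∑ j, p i j = 1`, then, writing `m¹ n = (Z n)'(0)` and `M i n = ∑ j, p i j · r i j n`,
the second derivatives at `0` satisfy `Z i''(0) = ∑ n, M i n · Z n''(0) + c i` with
`c i = ∑ j, p i j · [ (∑ n, r i j n · m¹ n)² − ∑ n, r i j n · (m¹ n)²
        + (y i j)² + 2 · y i j · ∑ n, r i j n · m¹ n ]`. -/
theorem second_order_moment_recursion {m : ℕ}
    (Z : Fin m → ℝ → ℝ) (hZ : ∀ i, ContDiff ℝ (⊤ : ℕ∞) (Z i)) (hZ0 : ∀ i, Z i 0 = 1)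
    (J : Fin m → ℕ) (p : ∀ i, Fin (J i) → ℝ) (y : ∀ i, Fin (J i) → ℝ)
    (r : ∀ i, Fin (J i) → Fin m → ℕ)
    (hp : ∀ i j, 0 ≤ p i j) (hp1 : ∀ i, ∑ j, p i j = 1)
    (hfix : ∀ᶠ t in nhds (0 : ℝ), ∀ i,
      Z i t = ∑ j, p i j * Real.exp (t * y i j) * ∏ n, (Z n t) ^ (r i j n)) :
    ∀ i : Fin m,
      deriv (deriv (Z i)) 0 =
        (∑ n, (∑ j, p i j * (r i j n : ℝ)) * deriv (deriv (Z n)) 0) +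
          ∑ j, p i j *
            ((∑ n, (r i j n : ℝ) * deriv (Z n) 0) ^ 2
              - (∑ n, (r i j n : ℝ) * (deriv (Z n) 0) ^ 2)
              + (y i j) ^ 2
              + 2 * y i j * ∑ n, (r i j n : ℝ) * deriv (Z n) 0) := by
  classical
  intro i
  have hZ' : ∀ n, ContDiff ℝ ∞ (Z n) := fun n => (hZ n).of_le (by simp)
  -- per-rule functions
  set U : Fin (J i) → ℝ → ℝ :=
    fun j t => p i j * Real.exp (t * y i j) * ∏ n, Z n t ^ r i j n with hU_def
  have huexp : ∀ j, ContDiff ℝ ∞ (fun t : ℝ => p i j * Real.exp (t * y i j)) := by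
    intro j
    exact contDiff_const.mul (Real.contDiff_exp.comp (contDiff_id.mul contDiff_const))
  have hWsm : ∀ j, ContDiff ℝ ∞ (fun t : ℝ => ∏ n, Z n t ^ r i j n) :=
    fun j => contDiff_prod fun n _ => (hZ' n).pow _
  have hUsm : ∀ j, ContDiff ℝ ∞ (U j) := fun j => (huexp j).mul (hWsm j)
  -- rewrite second derivative through the fixed point
  have hee : Z i =ᶠ[nhds 0] (fun t => ∑ j, U j t) := hfix.mono fun t ht => ht i
  have hstep : deriv (deriv (Z i)) 0 = deriv (deriv (fun t => ∑ j, U j t)) 0 :=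
    hee.deriv.deriv_eq
  have hFd : deriv (fun t => ∑ j, U j t) = fun t => ∑ j, deriv (U j) t :=
    funext fun t => deriv_fun_sum fun j _ => (MomRec.diff_of (hUsm j)) t
  have hF2 : deriv (deriv (fun t => ∑ j, U j t)) 0 = ∑ j, deriv (deriv (U j)) 0 := by
    rw [hFd]
    exact deriv_fun_sum fun j _ => (MomRec.diff_of (MomRec.deriv_smooth (hUsm j))) 0
  -- derivatives of the exponential factor
  have hud : ∀ j, deriv (fun t : ℝ => p i j * Real.exp (t * y i j))
      = fun t => p i j * (Real.exp (t * y i j) * y i j) := by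
    intro j
    funext t
    have h : HasDerivAt (fun s : ℝ => p i j * Real.exp (s * y i j))
        (p i j * (Real.exp (t * y i j) * y i j)) t := by
      have := (((Real.hasDerivAt_exp (t * y i j)).comp t
        ((hasDerivAt_id t).mul_const (y i j))).const_mul (p i j))
      simpa [Function.comp] using this
    exact h.deriv
  have hu1 : ∀ j, deriv (fun t : ℝ => p i j * Real.exp (t * y i j)) 0 = p i j * y i j := by
    intro j; rw [hud j]; simp
  have hu2 : ∀ j, deriv (deriv (fun t : ℝ => p i j * Real.exp (t * y i j))) 0
      = p i j * y i j ^ 2 := by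
    intro j
    rw [hud j]
    have : HasDerivAt (fun t : ℝ => p i j * (Real.exp (t * y i j) * y i j))
        (p i j * (Real.exp ((0:ℝ) * y i j) * y i j * y i j)) 0 := by
      have := ((((Real.hasDerivAt_exp ((0:ℝ) * y i j)).comp 0
        ((hasDerivAt_id 0).mul_const (y i j))).mul_const (y i j)).const_mul (p i j))
      simpa [Function.comp] using this
    rw [this.deriv]
    simp only [zero_mul, Real.exp_zero, one_mul]
    ring
  -- derivatives of the product factor
  have hpow0 : ∀ j n, (fun t => Z n t ^ r i j n) 0 = 1 := by
    intro j n; simp [hZ0 n]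
  have hW1 : ∀ j, deriv (fun t : ℝ => ∏ n, Z n t ^ r i j n) 0
      = ∑ n, (r i j n : ℝ) * deriv (Z n) 0 := by
    intro j
    have h := (MomRec.prod_derivs Finset.univ (fun n t => Z n t ^ r i j n)
      (fun n => (hZ' n).pow _) (fun n => by simp [hZ0 n])).1
    rw [h]
    exact Finset.sum_congr rfl fun n _ => (MomRec.pow_derivs (hZ' n) (hZ0 n) _).1
  have hW2 : ∀ j, deriv (deriv (fun t : ℝ => ∏ n, Z n t ^ r i j n)) 0
      = (∑ n, ((r i j n : ℝ) * deriv (deriv (Z n)) 0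
            + ((r i j n : ℝ) ^ 2 - r i j n) * (deriv (Z n) 0) ^ 2))
        + (∑ n, (r i j n : ℝ) * deriv (Z n) 0) ^ 2
        - ∑ n, ((r i j n : ℝ) * deriv (Z n) 0) ^ 2 := by
    intro j
    have h := (MomRec.prod_derivs Finset.univ (fun n t => Z n t ^ r i j n)
      (fun n => (hZ' n).pow _) (fun n => by simp [hZ0 n])).2
    have e1 : ∑ n, deriv (deriv (fun t => Z n t ^ r i j n)) 0
        = ∑ n, ((r i j n : ℝ) * deriv (deriv (Z n)) 0
            + ((r i j n : ℝ) ^ 2 - r i j n) * (deriv (Z n) 0) ^ 2) :=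
      Finset.sum_congr rfl fun n _ => (MomRec.pow_derivs (hZ' n) (hZ0 n) _).2
    have e2 : ∑ n, deriv (fun t => Z n t ^ r i j n) 0
        = ∑ n, (r i j n : ℝ) * deriv (Z n) 0 :=
      Finset.sum_congr rfl fun n _ => (MomRec.pow_derivs (hZ' n) (hZ0 n) _).1
    have e3 : ∑ n, (deriv (fun t => Z n t ^ r i j n) 0) ^ 2
        = ∑ n, ((r i j n : ℝ) * deriv (Z n) 0) ^ 2 :=
      Finset.sum_congr rfl fun n _ => by rw [(MomRec.pow_derivs (hZ' n) (hZ0 n) _).1]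
    rw [h, e1, e2, e3]
  have hW0 : ∀ j, (fun t : ℝ => ∏ n, Z n t ^ r i j n) 0 = 1 := by
    intro j; simp [hZ0]
  -- second derivative of each summand
  have hU2 : ∀ j, deriv (deriv (U j)) 0
      = p i j * y i j ^ 2 * 1
        + 2 * ((p i j * y i j) * (∑ n, (r i j n : ℝ) * deriv (Z n) 0))
        + (p i j * Real.exp ((0:ℝ) * y i j)) *
          ((∑ n, ((r i j n : ℝ) * deriv (deriv (Z n)) 0
              + ((r i j n : ℝ) ^ 2 - r i j n) * (deriv (Z n) 0) ^ 2))
            + (∑ n, (r i j n : ℝ) * deriv (Z n) 0) ^ 2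
            - ∑ n, ((r i j n : ℝ) * deriv (Z n) 0) ^ 2) := by
    intro j
    have e : U j = fun t => (fun s : ℝ => p i j * Real.exp (s * y i j)) t
        * (fun s : ℝ => ∏ n, Z n s ^ r i j n) t := rfl
    rw [e, MomRec.deriv2_mul (huexp j) (hWsm j) 0, hu1 j, hu2 j, hW1 j, hW2 j]
    simp [hZ0]
  -- put it together
  rw [hstep, hF2]
  have swap : (∑ n, (∑ j, p i j * (r i j n : ℝ)) * deriv (deriv (Z n)) 0)
      = ∑ j, ∑ n, p i j * (r i j n : ℝ) * deriv (deriv (Z n)) 0 := by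
    simp_rw [Finset.sum_mul]
    exact Finset.sum_comm
  rw [swap, ← Finset.sum_add_distrib]
  refine Finset.sum_congr rfl fun j _ => ?_
  rw [hU2 j]
  have hA : (∑ n, ((r i j n : ℝ) * deriv (deriv (Z n)) 0
        + ((r i j n : ℝ) ^ 2 - r i j n) * (deriv (Z n) 0) ^ 2))
      = (∑ n, (r i j n : ℝ) * deriv (deriv (Z n)) 0)
        + ∑ n, ((r i j n : ℝ) ^ 2 - r i j n) * (deriv (Z n) 0) ^ 2 :=
    Finset.sum_add_distrib
  have hT2 : (∑ n, ((r i j n : ℝ) ^ 2 - r i j n) * (deriv (Z n) 0) ^ 2)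
      = (∑ n, ((r i j n : ℝ) * deriv (Z n) 0) ^ 2)
        - ∑ n, (r i j n : ℝ) * (deriv (Z n) 0) ^ 2 := by
    rw [← Finset.sum_sub_distrib]
    exact Finset.sum_congr rfl fun n _ => by ring
  have hmul : (∑ n, p i j * (r i j n : ℝ) * deriv (deriv (Z n)) 0)
      = p i j * ∑ n, (r i j n : ℝ) * deriv (deriv (Z n)) 0 := by
    rw [Finset.mul_sum]
    exact Finset.sum_congr rfl fun n _ => by ring
  rw [hA, hT2, hmul]
  simp only [zero_mul, Real.exp_zero]
  ring
end
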